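/- Let λ > 0, φ > 0, and α > 0 be real numbers. Then for every ω > 0, 8φλ/ω² + αω ≥ 3·2^{1/3}·λ^{1/3}·φ^{1/3}·α^{2/3}, and equality holds if and only if ω = (16·φ·λ/α)^{1/3}. -/

import Mathlib

/-! AM-GM for the three terms `k/(2ω²), αω/2, αω/2`, made explicit: writing `k = αω₀³/2`
with `ω₀ = (2k/α)^{1/3}`, the cost `k/ω² + αω` exceeds `3αω₀/2` by
`α(ω₀ - ω)²(ω₀ + 2ω)/(2ω²)`, which vanishes only at `ω = ω₀`. For `k = 8φλ` the value `3αω₀/2`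
is the constant `3·2^{1/3}λ^{1/3}φ^{1/3}α^{2/3}`, as comparing cubes shows. -/

open Real

theorem cube_add_two_mul_cube_sub (x y : ℝ) :
    x ^ 3 + 2 * y ^ 3 - 3 * x * y ^ 2 = (x - y) ^ 2 * (x + 2 * y) := by
  ring

theorem cube_add_two_mul_cube_sub_nonneg {x y : ℝ} (hx : 0 ≤ x) (hy : 0 ≤ y) :
    0 ≤ x ^ 3 + 2 * y ^ 3 - 3 * x * y ^ 2 := by
  rw [cube_add_two_mul_cube_sub]
  positivity

theorem cube_add_two_mul_cube_sub_eq_zero_iff {x y : ℝ} (hx : 0 < x) (hy : 0 ≤ y) :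
    x ^ 3 + 2 * y ^ 3 - 3 * x * y ^ 2 = 0 ↔ x = y := by
  have hxy : x + 2 * y ≠ 0 := by positivity
  rw [cube_add_two_mul_cube_sub, mul_eq_zero, or_iff_left hxy, sq_eq_zero_iff, sub_eq_zero]

theorem rpow_one_third_pow_three {x : ℝ} (hx : 0 ≤ x) : (x ^ ((1 : ℝ) / 3)) ^ 3 = x := by
  simpa [one_div] using rpow_inv_natCast_pow hx (n := 3) (by norm_num)

theorem three_halves_mul_le_div_sq_add_mul {k α ω : ℝ} (hk : 0 < k) (hα : 0 < α) (hω : 0 < ω) :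
    3 / 2 * α * (2 * k / α) ^ ((1 : ℝ) / 3) ≤ k / ω ^ 2 + α * ω ∧
      (k / ω ^ 2 + α * ω = 3 / 2 * α * (2 * k / α) ^ ((1 : ℝ) / 3)
        ↔ ω = (2 * k / α) ^ ((1 : ℝ) / 3)) := by
  set ω₀ := (2 * k / α) ^ ((1 : ℝ) / 3)
  have hω₀ : 0 < ω₀ := by positivity
  have hk_eq : k = α / 2 * ω₀ ^ 3 := by
    rw [rpow_one_third_pow_three (by positivity)]
    field_simp
  have hgap : k / ω ^ 2 + α * ω - 3 / 2 * α * ω₀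
      = α / (2 * ω ^ 2) * (ω₀ ^ 3 + 2 * ω ^ 3 - 3 * ω₀ * ω ^ 2) := by
    rw [hk_eq]
    field_simp
  have hscale : 0 < α / (2 * ω ^ 2) := by positivity
  constructor
  · rw [← sub_nonneg, hgap]
    exact mul_nonneg hscale.le (cube_add_two_mul_cube_sub_nonneg hω₀.le hω.le)
  · rw [← sub_eq_zero, hgap, mul_eq_zero, or_iff_right hscale.ne',
      cube_add_two_mul_cube_sub_eq_zero_iff hω₀ hω.le, eq_comm]

theorem three_mul_rpow_one_third_eq_three_halves_mul {lam φ α : ℝ} (hlam : 0 < lam) (hφ : 0 < φ) (hα : 0 < α) :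
    3 * 2 ^ ((1 : ℝ) / 3) * lam ^ ((1 : ℝ) / 3) * φ ^ ((1 : ℝ) / 3) * α ^ ((2 : ℝ) / 3)
      = 3 / 2 * α * (16 * φ * lam / α) ^ ((1 : ℝ) / 3) := by
  have hα23 : (α ^ ((2 : ℝ) / 3)) ^ 3 = α ^ 2 := by
    rw [← rpow_natCast, ← rpow_mul hα.le]
    norm_num
  refine (pow_left_inj₀ (by positivity) (by positivity) three_ne_zero).mp ?_
  simp only [mul_pow, rpow_one_third_pow_three zero_le_two, rpow_one_third_pow_three hlam.le,
    rpow_one_third_pow_three hφ.le, hα23,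
    rpow_one_third_pow_three (by positivity : 0 ≤ 16 * φ * lam / α)]
  field_simp
  ring

/-- Minimal maintenance cost of a balanced channel: for all `ω > 0`,
`8φλ/ω² + αω ≥ 3·2^{1/3}·λ^{1/3}·φ^{1/3}·α^{2/3}`, with equality iff
`ω = (16φλ/α)^{1/3}`. -/
theorem stmt11 (lam φ α : ℝ) (hlam : 0 < lam) (hφ : 0 < φ) (hα : 0 < α)
    (ω : ℝ) (hω : 0 < ω) :
    (3 * 2 ^ ((1 : ℝ) / 3) * lam ^ ((1 : ℝ) / 3) * φ ^ ((1 : ℝ) / 3) * α ^ ((2 : ℝ) / 3)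
        ≤ 8 * φ * lam / ω ^ 2 + α * ω) ∧
    ((8 * φ * lam / ω ^ 2 + α * ω
        = 3 * 2 ^ ((1 : ℝ) / 3) * lam ^ ((1 : ℝ) / 3) * φ ^ ((1 : ℝ) / 3) * α ^ ((2 : ℝ) / 3))
      ↔ ω = (16 * φ * lam / α) ^ ((1 : ℝ) / 3)) := by
  have h16 : 2 * (8 * φ * lam) / α = 16 * φ * lam / α := by ring
  rw [three_mul_rpow_one_third_eq_three_halves_mul hlam hφ hα]
  simpa only [h16] using three_halves_mul_le_div_sq_add_mul (by positivity : 0 < 8 * φ * lam) hα hω
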